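/- Let f ∈ ℝ[θ,x₁,x₂,x₃] be a polynomial such that {f,x₁} = {f,x₂} = {f,x₃} = 0, where {·,·} is determined by {x₂,x₃} = x₁, {x₁,x₃} = x₂, {x₁,x₂} = −x₃, {θ,·} = 0 and the Leibniz rule; explicitly {f,g} = x₁(∂₂f·∂₃g − ∂₃f·∂₂g) + x₂(∂₁f·∂₃g − ∂₃f·∂₁g) − x₃(∂₁f·∂₂g − ∂₂f·∂₁g). Then f belongs to the ℝ-subalgebra of ℝ[θ,x₁,x₂,x₃] generated by Q¹ = θ and Q² = −x₁² + x₂² + x₃². -/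

import Mathlib

open MvPolynomial

/-- The fold-circle Poisson bracket (conformal factor 1) on polynomials
ℝ[θ,x₁,x₂,x₃], with θ the variable of index 0. -/
noncomputable def polyFoldBracket (f g : MvPolynomial (Fin 4) ℝ) :
    MvPolynomial (Fin 4) ℝ :=
  X 1 * (pderiv 2 f * pderiv 3 g - pderiv 3 f * pderiv 2 g)
  + X 2 * (pderiv 1 f * pderiv 3 g - pderiv 3 f * pderiv 1 g)
  - X 3 * (pderiv 1 f * pderiv 2 g - pderiv 2 f * pderiv 1 g)

/-- Chain rule for `pderiv` of an `aeval` substitution. -/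
lemma pderiv_aeval_fin {n m : ℕ} (g : Fin n → MvPolynomial (Fin m) ℝ)
    (p : MvPolynomial (Fin n) ℝ) (i : Fin m) :
    pderiv i (aeval g p) = ∑ j, aeval g (pderiv j p) * pderiv i (g j) := by
  induction p using MvPolynomial.induction_on with
  | C a => simp
  | add p q hp hq =>
      simp only [map_add, hp, hq, add_mul, Finset.sum_add_distrib]
  | mul_X p k hp =>
      simp only [map_mul, aeval_X, pderiv_mul, hp, pderiv_X, map_add, add_mul,
        Finset.sum_add_distrib, Finset.sum_mul]
      congr 1
      · exact Finset.sum_congr rfl fun j _ => by ring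
      · rw [Finset.sum_eq_single k]
        · simp
        · intro j _ hj
          simp [Pi.single_eq_of_ne hj.symm]
        · simp

lemma X_mul_pderiv_monomial {n : ℕ} (i : Fin n) (s : Fin n →₀ ℕ) (a : ℝ) :
    X i * pderiv i (monomial s a) = monomial s (a * s i) := by
  rw [pderiv_monomial]
  rcases Nat.eq_zero_or_pos (s i) with h | h
  · simp [h]
  · have hs : Finsupp.single i 1 + (s - Finsupp.single i 1) = s := by
      ext j
      rcases eq_or_ne j i with rfl | hj
      · simp [Finsupp.single_eq_same]; omega
      · simp [Finsupp.single_eq_of_ne' (Ne.symm hj)]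
    conv_rhs => rw [← hs]
    rw [monomial_single_add, pow_one]
    congr 1
    rw [hs]

lemma coeff_X_mul_pderiv {n : ℕ} (i : Fin n) (p : MvPolynomial (Fin n) ℝ)
    (m : Fin n →₀ ℕ) : coeff m (X i * pderiv i p) = coeff m p * m i := by
  conv_lhs => rw [← support_sum_monomial_coeff p]
  rw [map_sum (pderiv i), Finset.mul_sum, coeff_sum]
  simp only [X_mul_pderiv_monomial, coeff_monomial]
  rw [Finset.sum_eq_single m]
  · rw [if_pos rfl]
  · intro b _ hb; simp [hb]
  · intro h; rw [if_pos rfl, notMem_support_iff.mp h, zero_mul]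

lemma mon2 (a b : ℕ) (r : ℝ) :
    (monomial (Finsupp.single 0 a + Finsupp.single 1 b) r : MvPolynomial (Fin 2) ℝ)
      = C r * X 0 ^ a * X 1 ^ b := by
  rw [monomial_single_add, ← add_zero (Finsupp.single 1 b), monomial_single_add,
    monomial_zero']
  ring

lemma mon3 (a b c : ℕ) (r : ℝ) :
    (monomial (Finsupp.single 0 a + Finsupp.single 1 b + Finsupp.single 2 c) r :
      MvPolynomial (Fin 3) ℝ) = C r * X 0 ^ a * X 1 ^ b * X 2 ^ c := by
  rw [add_assoc, monomial_single_add, monomial_single_add, ← add_zero (Finsupp.single 2 c),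
    monomial_single_add, monomial_zero']
  ring

lemma mon4 (a b c d : ℕ) (r : ℝ) :
    (monomial (Finsupp.single 0 a + Finsupp.single 1 b + Finsupp.single 2 c
      + Finsupp.single 3 d) r : MvPolynomial (Fin 4) ℝ)
      = C r * X 0 ^ a * X 1 ^ b * X 2 ^ c * X 3 ^ d := by
  rw [add_assoc, add_assoc, monomial_single_add, monomial_single_add,
    monomial_single_add, ← add_zero (Finsupp.single 3 d), monomial_single_add, monomial_zero']
  ring

lemma fin4_decomp (m : Fin 4 →₀ ℕ) :
    m = Finsupp.single 0 (m 0) + Finsupp.single 1 (m 1) + Finsupp.single 2 (m 2)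
      + Finsupp.single 3 (m 3) := by
  ext j
  fin_cases j <;> simp [Finsupp.single_apply]

lemma fin3_decomp (m : Fin 3 →₀ ℕ) :
    m = Finsupp.single 0 (m 0) + Finsupp.single 1 (m 1) + Finsupp.single 2 (m 2) := by
  ext j
  fin_cases j <;> simp [Finsupp.single_apply]

noncomputable def w4 : Fin 4 → MvPolynomial (Fin 4) ℝ := ![X 0, X 1 + X 3, X 2, X 1 - X 3]
noncomputable def w4inv : Fin 4 → MvPolynomial (Fin 4) ℝ :=
  ![X 0, C ((2:ℝ)⁻¹) * (X 1 + X 3), X 2, C ((2:ℝ)⁻¹) * (X 1 - X 3)]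
noncomputable def w3 : Fin 3 → MvPolynomial (Fin 4) ℝ := ![X 0, X 2, X 1 * X 3]
noncomputable def w3inv : Fin 4 → MvPolynomial (Fin 3) ℝ := ![X 0, X 2, X 1, 1]
noncomputable def t3 : Fin 3 → MvPolynomial (Fin 3) ℝ := ![X 0, X 1, X 2 - X 1 ^ 2]
noncomputable def t3inv : Fin 3 → MvPolynomial (Fin 3) ℝ := ![X 0, X 1, X 2 + X 1 ^ 2]
noncomputable def w2 : Fin 2 → MvPolynomial (Fin 3) ℝ := ![X 0, X 2]

lemma hone4 : (C ((2:ℝ)⁻¹) : MvPolynomial (Fin 4) ℝ) * 2 = 1 := by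
  rw [show (2:MvPolynomial (Fin 4) ℝ) = C (2:ℝ) from (map_ofNat C 2).symm, ← C_mul]
  norm_num

lemma phi_phiInv (p : MvPolynomial (Fin 4) ℝ) : aeval w4 (aeval w4inv p) = p := by
  rw [comp_aeval_apply]
  have h : ∀ i : Fin 4, aeval w4 (w4inv i) = X i := by
    intro i
    fin_cases i
    · simp [w4, w4inv]
    · simp [w4, w4inv]
      linear_combination (X 1 : MvPolynomial (Fin 4) ℝ) * hone4
    · simp [w4, w4inv]
    · simp [w4, w4inv]
      linear_combination (X 3 : MvPolynomial (Fin 4) ℝ) * hone4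
  rw [funext h, aeval_X_left_apply]

lemma phiInv_phi (p : MvPolynomial (Fin 4) ℝ) : aeval w4inv (aeval w4 p) = p := by
  rw [comp_aeval_apply]
  have h : ∀ i : Fin 4, aeval w4inv (w4 i) = X i := by
    intro i
    fin_cases i
    · simp [w4, w4inv]
    · simp [w4, w4inv]
      linear_combination (X 1 : MvPolynomial (Fin 4) ℝ) * hone4
    · simp [w4, w4inv]
    · simp [w4, w4inv]
      linear_combination (X 3 : MvPolynomial (Fin 4) ℝ) * hone4
  rw [funext h, aeval_X_left_apply]

lemma tau_tauInv (p : MvPolynomial (Fin 3) ℝ) : aeval t3 (aeval t3inv p) = p := by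
  rw [comp_aeval_apply]
  have h : ∀ i : Fin 3, aeval t3 (t3inv i) = X i := by
    intro i
    fin_cases i <;> simp [t3, t3inv]
  rw [funext h, aeval_X_left_apply]

lemma tauInv_tau (p : MvPolynomial (Fin 3) ℝ) : aeval t3inv (aeval t3 p) = p := by
  rw [comp_aeval_apply]
  have h : ∀ i : Fin 3, aeval t3inv (t3 i) = X i := by
    intro i
    fin_cases i <;> simp [t3, t3inv]
  rw [funext h, aeval_X_left_apply]

lemma rho_psi (p : MvPolynomial (Fin 3) ℝ) : aeval w3inv (aeval w3 p) = p := by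
  rw [comp_aeval_apply]
  have h : ∀ i : Fin 3, aeval w3inv (w3 i) = X i := by
    intro i
    fin_cases i <;> simp [w3, w3inv]
  rw [funext h, aeval_X_left_apply]

lemma pdphi1 (F : MvPolynomial (Fin 4) ℝ) :
    pderiv 1 (aeval w4 F) = aeval w4 (pderiv 1 F) + aeval w4 (pderiv 3 F) := by
  rw [pderiv_aeval_fin, Fin.sum_univ_four]
  simp [w4, pderiv_X]

lemma pdphi2 (F : MvPolynomial (Fin 4) ℝ) :
    pderiv 2 (aeval w4 F) = aeval w4 (pderiv 2 F) := by
  rw [pderiv_aeval_fin, Fin.sum_univ_four]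
  simp [w4, pderiv_X]

lemma pdphi3 (F : MvPolynomial (Fin 4) ℝ) :
    pderiv 3 (aeval w4 F) = aeval w4 (pderiv 1 F) - aeval w4 (pderiv 3 F) := by
  rw [pderiv_aeval_fin, Fin.sum_univ_four]
  simp [w4, pderiv_X]
  ring

lemma pdpsi1 (G : MvPolynomial (Fin 3) ℝ) :
    pderiv 1 (aeval w3 G) = aeval w3 (pderiv 2 G) * X 3 := by
  rw [pderiv_aeval_fin, Fin.sum_univ_three]
  simp [w3, pderiv_X]

lemma pdpsi2 (G : MvPolynomial (Fin 3) ℝ) :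
    pderiv 2 (aeval w3 G) = aeval w3 (pderiv 1 G) := by
  rw [pderiv_aeval_fin, Fin.sum_univ_three]
  simp [w3, pderiv_X]

lemma pdpsi3 (G : MvPolynomial (Fin 3) ℝ) :
    pderiv 3 (aeval w3 G) = aeval w3 (pderiv 2 G) * X 1 := by
  rw [pderiv_aeval_fin, Fin.sum_univ_three]
  simp [w3, pderiv_X]

lemma pdtau1 (H : MvPolynomial (Fin 3) ℝ) :
    pderiv 1 (aeval t3 H) = aeval t3 (pderiv 1 H)
      - aeval t3 (pderiv 2 H) * (2 * X 1) := by
  rw [pderiv_aeval_fin, Fin.sum_univ_three]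
  simp [t3, pderiv_X]
  ring

lemma pdtau2 (H : MvPolynomial (Fin 3) ℝ) :
    pderiv 2 (aeval t3 H) = aeval t3 (pderiv 2 H) := by
  rw [pderiv_aeval_fin, Fin.sum_univ_three]
  simp [t3, pderiv_X]

lemma psi_monomial (a b c : ℕ) (r : ℝ) :
    aeval w3 (monomial (Finsupp.single 0 a + Finsupp.single 1 b + Finsupp.single 2 c) r)
      = (monomial (Finsupp.single 0 a + Finsupp.single 1 c + Finsupp.single 2 b
          + Finsupp.single 3 c) r : MvPolynomial (Fin 4) ℝ) := by
  rw [mon3, mon4]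
  simp only [w3, map_mul, map_pow, aeval_C, aeval_X, Matrix.cons_val_zero, Matrix.cons_val_one,
    Matrix.head_cons, Matrix.cons_val_two, Matrix.tail_cons, algebraMap_eq]
  ring

lemma memA (p : MvPolynomial (Fin 4) ℝ) (h : ∀ m ∈ p.support, m 1 = m 3) :
    p ∈ (aeval w3 : MvPolynomial (Fin 3) ℝ →ₐ[ℝ] MvPolynomial (Fin 4) ℝ).range := by
  rw [← support_sum_monomial_coeff p]
  apply Subalgebra.sum_mem
  intro m hm
  refine ⟨monomial (Finsupp.single 0 (m 0) + Finsupp.single 1 (m 2)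
    + Finsupp.single 2 (m 1)) (coeff m p), ?_⟩
  show (aeval w3 : MvPolynomial (Fin 3) ℝ →ₐ[ℝ] MvPolynomial (Fin 4) ℝ) _ = _
  rw [psi_monomial]
  set r := coeff m p with hr
  conv_rhs => rw [fin4_decomp m]
  rw [h m hm]

lemma chi_monomial (a b : ℕ) (r : ℝ) :
    aeval w2 (monomial (Finsupp.single 0 a + Finsupp.single 1 b) r)
      = (monomial (Finsupp.single 0 a + Finsupp.single 1 0 + Finsupp.single 2 b) r :
          MvPolynomial (Fin 3) ℝ) := by
  rw [mon2, mon3]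
  simp only [w2, map_mul, map_pow, aeval_C, aeval_X, Matrix.cons_val_zero, Matrix.cons_val_one,
    Matrix.head_cons, algebraMap_eq, pow_zero]
  ring

lemma memC (p : MvPolynomial (Fin 3) ℝ) (h : ∀ m ∈ p.support, m 1 = 0) :
    p ∈ (aeval w2 : MvPolynomial (Fin 2) ℝ →ₐ[ℝ] MvPolynomial (Fin 3) ℝ).range := by
  rw [← support_sum_monomial_coeff p]
  apply Subalgebra.sum_mem
  intro m hm
  refine ⟨monomial (Finsupp.single 0 (m 0) + Finsupp.single 1 (m 2)) (coeff m p), ?_⟩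
  show (aeval w2 : MvPolynomial (Fin 2) ℝ →ₐ[ℝ] MvPolynomial (Fin 3) ℝ) _ = _
  rw [chi_monomial]
  set r := coeff m p with hr
  conv_rhs => rw [fin3_decomp m]
  rw [h m hm]

lemma aeval_mem_subalg {n : ℕ} {A : Type*} [CommRing A] [Algebra ℝ A]
    (S : Subalgebra ℝ A) (v : Fin n → A) (hv : ∀ i, v i ∈ S)
    (q : MvPolynomial (Fin n) ℝ) : aeval v q ∈ S := by
  induction q using MvPolynomial.induction_on with
  | C a => simpa using S.algebraMap_mem a
  | add p q hp hq => rw [map_add]; exact add_mem hp hq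
  | mul_X p k hp => rw [map_mul, aeval_X]; exact mul_mem hp (hv k)

lemma XX_ne : (X 1 + X 3 : MvPolynomial (Fin 4) ℝ) ≠ 0 := by
  intro h0
  have := congrArg (coeff (Finsupp.single 1 1)) h0
  simp [coeff_X', Finsupp.single_eq_single_iff] at this

/-- A polynomial Casimir of the fold-circle Poisson structure lies in the
subalgebra generated by `Q¹ = θ` and `Q² = −x₁² + x₂² + x₃²`. -/
theorem foldBracket_poly_casimirs (f : MvPolynomial (Fin 4) ℝ)
    (h1 : polyFoldBracket f (X 1) = 0)
    (h2 : polyFoldBracket f (X 2) = 0)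
    (h3 : polyFoldBracket f (X 3) = 0) :
    f ∈ Algebra.adjoin ℝ
      ({X 0, -X 1 ^ 2 + X 2 ^ 2 + X 3 ^ 2} : Set (MvPolynomial (Fin 4) ℝ)) := by
  -- rewrite the bracket conditions
  have pd1 : ∀ i : Fin 4, i ≠ 1 → pderiv i (X 1 : MvPolynomial (Fin 4) ℝ) = 0 :=
    fun i hi => pderiv_X_of_ne (by simpa using hi.symm)
  unfold polyFoldBracket at h2 h3
  simp [pderiv_X, Pi.single_apply] at h2 h3
  have E2 : X 1 * pderiv 3 f + X 3 * pderiv 1 f = 0 := by linear_combination -h2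
  have E3 : X 1 * pderiv 2 f + X 2 * pderiv 1 f = 0 := by linear_combination h3
  -- pass to the diagonalizing coordinates
  set F := aeval w4inv f with hFdef
  have hfF : aeval w4 F = f := phi_phiInv f
  have d1 : aeval w4inv (pderiv 1 f) = pderiv 1 F + pderiv 3 F := by
    rw [← hfF, pdphi1, map_add, phiInv_phi, phiInv_phi]
  have d2 : aeval w4inv (pderiv 2 f) = pderiv 2 F := by
    rw [← hfF, pdphi2, phiInv_phi]
  have d3 : aeval w4inv (pderiv 3 f) = pderiv 1 F - pderiv 3 F := by
    rw [← hfF, pdphi3, map_sub, phiInv_phi, phiInv_phi]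
  have a1 : aeval w4inv (X 1 : MvPolynomial (Fin 4) ℝ) = C ((2:ℝ)⁻¹) * (X 1 + X 3) := by
    simp [w4inv]
  have a2 : aeval w4inv (X 2 : MvPolynomial (Fin 4) ℝ) = X 2 := by simp [w4inv]
  have a3 : aeval w4inv (X 3 : MvPolynomial (Fin 4) ℝ) = C ((2:ℝ)⁻¹) * (X 1 - X 3) := by
    simp [w4inv]
  have e2' : C ((2:ℝ)⁻¹) * (X 1 + X 3) * (pderiv 1 F - pderiv 3 F)
      + C ((2:ℝ)⁻¹) * (X 1 - X 3) * (pderiv 1 F + pderiv 3 F) = 0 := by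
    have := congrArg (aeval w4inv) E2
    rw [map_add, map_mul, map_mul, map_zero, a1, a3, d1, d3] at this
    exact this
  have hD : X 1 * pderiv 1 F - X 3 * pderiv 3 F = 0 := by
    linear_combination e2' - (X 1 * pderiv 1 F - X 3 * pderiv 3 F) * hone4
  have hsupp : ∀ m ∈ F.support, m 1 = m 3 := by
    intro m hm
    have hc := congrArg (coeff m) hD
    rw [coeff_sub, coeff_zero, coeff_X_mul_pderiv, coeff_X_mul_pderiv, sub_eq_zero] at hc
    have hne : coeff m F ≠ 0 := mem_support_iff.mp hm
    have : (m 1 : ℝ) = m 3 := mul_left_cancel₀ hne hc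
    exact_mod_cast this
  obtain ⟨G, hG⟩ := memA F hsupp
  -- transfer the remaining condition to G
  have e3' : C ((2:ℝ)⁻¹) * (X 1 + X 3) * pderiv 2 F
      + X 2 * (pderiv 1 F + pderiv 3 F) = 0 := by
    have := congrArg (aeval w4inv) E3
    rw [map_add, map_mul, map_mul, map_zero, a1, a2, d1, d2] at this
    exact this
  have hGF : aeval w3 G = F := hG
  have e3'' : C ((2:ℝ)⁻¹) * (X 1 + X 3) * aeval w3 (pderiv 1 G)
      + X 2 * (aeval w3 (pderiv 2 G) * X 3 + aeval w3 (pderiv 2 G) * X 1) = 0 := by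
    rw [← pdpsi1, ← pdpsi2, ← pdpsi3, hGF]
    exact e3'
  have key : C ((2:ℝ)⁻¹) * ((X 1 + X 3) * (aeval w3 (pderiv 1 G)
      + 2 * X 2 * aeval w3 (pderiv 2 G))) = 0 := by
    linear_combination e3'' + X 2 * (X 1 + X 3) * (aeval w3 (pderiv 2 G)) * hone4
  have hCne : (C ((2:ℝ)⁻¹) : MvPolynomial (Fin 4) ℝ) ≠ 0 := by
    simp
  have key2 : aeval w3 (pderiv 1 G) + 2 * X 2 * aeval w3 (pderiv 2 G) = 0 := by
    rcases mul_eq_zero.mp key with h | h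
    · exact absurd h hCne
    · rcases mul_eq_zero.mp h with h' | h'
      · exact absurd h' XX_ne
      · exact h'
  have key3 : aeval w3 (pderiv 1 G + 2 * X 1 * pderiv 2 G) = 0 := by
    rw [map_add, map_mul, map_mul, aeval_X]
    have : aeval w3 (2 : MvPolynomial (Fin 3) ℝ) = 2 := map_ofNat _ 2
    rw [this]
    have hX1 : (w3 1 : MvPolynomial (Fin 4) ℝ) = X 2 := by simp [w3]
    calc aeval w3 (pderiv 1 G) + 2 * w3 1 * aeval w3 (pderiv 2 G)
        = aeval w3 (pderiv 1 G) + 2 * X 2 * aeval w3 (pderiv 2 G) := by rw [hX1]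
      _ = 0 := key2
  have hPDEG : pderiv 1 G + 2 * X 1 * pderiv 2 G = 0 := by
    have := congrArg (aeval w3inv) key3
    rwa [rho_psi, map_zero] at this
  -- straighten with τ
  set H := aeval t3inv G with hHdef
  have hGH : aeval t3 H = G := tau_tauInv G
  have hpdH : aeval t3 (pderiv 1 H) = 0 := by
    have e : pderiv 1 (aeval t3 H) + 2 * X 1 * pderiv 2 (aeval t3 H) = 0 := by
      rw [hGH]; exact hPDEG
    rw [pdtau1, pdtau2] at e
    linear_combination e
  have hpdH0 : pderiv 1 H = 0 := by
    have := congrArg (aeval t3inv) hpdH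
    rwa [tauInv_tau, map_zero] at this
  have hsuppH : ∀ m ∈ H.support, m 1 = 0 := by
    intro m hm
    have h0 : X 1 * pderiv 1 H = 0 := by rw [hpdH0, mul_zero]
    have hc := congrArg (coeff m) h0
    rw [coeff_X_mul_pderiv, coeff_zero] at hc
    have hne : coeff m H ≠ 0 := mem_support_iff.mp hm
    have : (m 1 : ℝ) = 0 := by
      rcases mul_eq_zero.mp hc with h | h
      · exact absurd h hne
      · exact h
    exact_mod_cast this
  obtain ⟨K, hK⟩ := memC H hsuppH
  have hKH : aeval w2 K = H := hK
  -- assemble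
  have hf : f = aeval w4 (aeval w3 (aeval t3 (aeval w2 K))) := by
    rw [hKH, hGH, hGF, hfF]
  set S := Algebra.adjoin ℝ
      ({X 0, -X 1 ^ 2 + X 2 ^ 2 + X 3 ^ 2} : Set (MvPolynomial (Fin 4) ℝ)) with hS
  have hQ : (-X 1 ^ 2 + X 2 ^ 2 + X 3 ^ 2 : MvPolynomial (Fin 4) ℝ) ∈ S :=
    Algebra.subset_adjoin (by simp)
  have hv0 : aeval w4 (aeval w3 (aeval t3 (w2 0))) ∈ S := by
    have h0 : aeval w4 (aeval w3 (aeval t3 (w2 0))) = X 0 := by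
      simp [w4, w3, t3, w2]
    rw [h0]
    exact Algebra.subset_adjoin (by simp)
  have hv1 : aeval w4 (aeval w3 (aeval t3 (w2 1))) ∈ S := by
    have h1' : aeval w4 (aeval w3 (aeval t3 (w2 1)))
        = -(-X 1 ^ 2 + X 2 ^ 2 + X 3 ^ 2 : MvPolynomial (Fin 4) ℝ) := by
      simp [w4, w3, t3, w2]
      ring
    rw [h1']
    exact neg_mem hQ
  rw [hf, comp_aeval_apply, comp_aeval_apply, comp_aeval_apply]
  apply aeval_mem_subalg
  intro i
  fin_cases i
  · rw [← comp_aeval_apply, ← comp_aeval_apply]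
    exact hv0
  · rw [← comp_aeval_apply, ← comp_aeval_apply]
    exact hv1
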